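/- arXiv:1104.4001 — 2 statements merged into one kernel-verified Lean document; each statement's English description precedes it below -/
import Mathlib

section
/- Let (X,d) be a metric space, κ > 0, and let f : ℝ → X satisfy the reverse triangle inequality d(f(s),f(t)) + d(f(t),f(u)) ≤ d(f(s),f(u)) + κ for all s ≤ t ≤ u. If t₀ < t₁ < … < tₙ are real numbers with d(f(tᵢ), f(t_{i+1})) ≥ 2κ for all i < n, then d(f(t₀), f(tₙ)) ≥ nκ. -/
/-!
Each step of the chain has length at least `2κ`, and the reverse triangle inequality at the
points `t₀ ≤ tₖ ≤ tₖ₊₁` says that appending a step to the chain `t₀, …, tₖ` loses at most `κ`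
of its length. So `d(f t₀, f tₖ)` grows by at least `κ` per step.
-/

theorem apply_zero_le_of_forall_lt_le_succ {α : Type*} [Preorder α] {g : ℕ → α} {n : ℕ}
    (hg : ∀ i < n, g i ≤ g (i + 1)) {k : ℕ} (hk : k ≤ n) : g 0 ≤ g k := by
  induction k with
  | zero => exact le_rfl
  | succ k ih => exact (ih (k.le_succ.trans hk)).trans (hg k hk)

theorem mul_sub_le_dist_of_dist_add_dist_le {X : Type*} [PseudoMetricSpace X] {κ c : ℝ} {n : ℕ}
    {x : ℕ → X}
    (hrev : ∀ k < n, dist (x 0) (x k) + dist (x k) (x (k + 1)) ≤ dist (x 0) (x (k + 1)) + κ)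
    (hstep : ∀ k < n, c ≤ dist (x k) (x (k + 1))) :
    n * (c - κ) ≤ dist (x 0) (x n) := by
  induction n with
  | zero => simp
  | succ n ih =>
    have hprev := ih (fun k hk => hrev k (hk.trans n.lt_succ_self))
      (fun k hk => hstep k (hk.trans n.lt_succ_self))
    have hlast := hrev n n.lt_succ_self
    have hc := hstep n n.lt_succ_self
    push_cast
    linarith

theorem stmt_0_general {X : Type*} [MetricSpace X] (κ : ℝ) (f : ℝ → X)
    (hrev : ∀ s t u : ℝ, s ≤ t → t ≤ u →
      dist (f s) (f t) + dist (f t) (f u) ≤ dist (f s) (f u) + κ)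
    (n : ℕ) (t : ℕ → ℝ) (hmono : ∀ i < n, t i < t (i + 1))
    (hbig : ∀ i < n, 2 * κ ≤ dist (f (t i)) (f (t (i + 1)))) :
    (n : ℝ) * κ ≤ dist (f (t 0)) (f (t n)) := by
  have ht₀ : ∀ k ≤ n, t 0 ≤ t k := fun k hk =>
    apply_zero_le_of_forall_lt_le_succ (fun i hi => (hmono i hi).le) hk
  have h := mul_sub_le_dist_of_dist_add_dist_le (x := f ∘ t)
    (fun k hk => hrev _ _ _ (ht₀ k hk.le) (hmono k hk).le) hbig
  simpa [two_mul] using h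

theorem stmt_0 {X : Type*} [MetricSpace X] (κ : ℝ) (hκ : 0 < κ) (f : ℝ → X)
    (hrev : ∀ s t u : ℝ, s ≤ t → t ≤ u →
      dist (f s) (f t) + dist (f t) (f u) ≤ dist (f s) (f u) + κ)
    (n : ℕ) (t : ℕ → ℝ) (hmono : ∀ i < n, t i < t (i + 1))
    (hbig : ∀ i < n, 2 * κ ≤ dist (f (t i)) (f (t (i + 1)))) :
    (n : ℝ) * κ ≤ dist (f (t 0)) (f (t n)) :=
  stmt_0_general κ f hrev n t hmono hbig
end

section
/- Let T > 0, b ∈ (0,1), and let A, B ⊆ [0,T] be Lebesgue measurable sets with λ(B) ≥ (1-b/8)T and λ(A) ≥ bT. Let T' > 0 with T' ≤ bT/16. Then the set C = { s ∈ B ∩ [0, T - T'] : λ(A ∩ [s, s+T']) ≥ bT'/4 } has Lebesgue measure at least bT/4. -/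
/-!
Integrate `f s = λ(A ∩ [s, s + T'])` over `s ∈ [0, T - T']`. By Fubini the integral is at least
`T' λ(A ∩ [T', T - T']) ≥ T' (bT - 2T')`, since each `u ∈ A ∩ [T', T - T']` lies in `[s, s + T']`
for all `s` in an interval of length `T'` inside `[0, T - T']`. On the other hand `f ≤ T'`
everywhere, `f < bT'/4` on `B \ C`, and `[0, T - T'] \ B` has measure at most `bT/8`, so the
integral is at most `T' λ(C) + (bT'/4) T + T' (bT/8)`. Comparing the two bounds with `2T' ≤ bT/8`
gives `λ(C) ≥ bT/2`.
-/

open MeasureTheory Set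
open scoped ENNReal

lemma volume_inter_Icc_add_le (A : Set ℝ) (s r : ℝ) :
    volume (A ∩ Icc s (s + r)) ≤ ENNReal.ofReal r :=
  (measure_mono inter_subset_right).trans_eq (by simp)

lemma volume_Icc_sdiff_le {B : Set ℝ} {a b c p : ℝ} (hB : MeasurableSet B)
    (hBsub : B ⊆ Icc a b) (hcb : c ≤ b) (hp : 0 ≤ p) (hBp : ENNReal.ofReal p ≤ volume B) :
    volume (Icc a c \ B) ≤ ENNReal.ofReal (b - a - p) :=
  calc volume (Icc a c \ B) ≤ volume (Icc a b \ B) :=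
        measure_mono (sdiff_subset_sdiff_left (Icc_subset_Icc le_rfl hcb))
    _ = ENNReal.ofReal (b - a) - volume B := by
        rw [measure_sdiff hBsub hB.nullMeasurableSet (measure_ne_top_of_subset hBsub (by simp)),
          Real.volume_Icc]
    _ ≤ ENNReal.ofReal (b - a - p) := by
        rw [ENNReal.ofReal_sub _ hp]; exact tsub_le_tsub_left hBp _

lemma volume_le_volume_inter_Icc_add {A : Set ℝ} {a d : ℝ} (hA : A ⊆ Icc a d) (b c : ℝ) :
    volume A ≤ volume (A ∩ Icc b c) + ENNReal.ofReal (b - a) + ENNReal.ofReal (d - c) := by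
  have hcover : A ⊆ (A ∩ Icc b c) ∪ Ico a b ∪ Ioc c d := by
    intro u hu
    obtain ⟨hau, hud⟩ := hA hu
    by_cases hub : u < b
    · exact Or.inl (Or.inr ⟨hau, hub⟩)
    by_cases hcu : c < u
    · exact Or.inr ⟨hcu, hud⟩
    exact Or.inl (Or.inl ⟨hu, not_lt.1 hub, not_lt.1 hcu⟩)
  calc volume A ≤ volume ((A ∩ Icc b c) ∪ Ico a b ∪ Ioc c d) := measure_mono hcover
    _ ≤ volume (A ∩ Icc b c) + volume (Ico a b) + volume (Ioc c d) :=
        (measure_union_le _ _).trans (by gcongr; exact measure_union_le _ _)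
    _ = _ := by rw [Real.volume_Ico, Real.volume_Ioc]

/-- A reverse Markov inequality for a bounded function. -/
lemma setLIntegral_le_mul_meas_ge_add {α : Type*} [MeasurableSpace α] {μ : Measure α}
    {f : α → ℝ≥0∞} {I B : Set α} (hI : MeasurableSet I) (hB : MeasurableSet B) {M : ℝ≥0∞}
    (hfM : ∀ x, f x ≤ M) (t : ℝ≥0∞) :
    ∫⁻ x in I, f x ∂μ ≤ M * μ {x | x ∈ B ∩ I ∧ t ≤ f x} + t * μ I + M * μ (I \ B) := by
  set C := {x | x ∈ B ∩ I ∧ t ≤ f x}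
  calc ∫⁻ x in I, f x ∂μ
      ≤ ∫⁻ x in I, ((I \ B).indicator (fun _ => M) x + (C.indicator (fun _ => M) x + t)) ∂μ := by
        refine setLIntegral_mono' hI fun x hx => ?_
        by_cases hxB : x ∈ B
        · by_cases hxC : x ∈ C
          · rw [indicator_of_mem hxC]
            exact (hfM x).trans (le_add_left le_self_add)
          · have : f x < t := not_le.1 fun h => hxC ⟨⟨hxB, hx⟩, h⟩
            simp [indicator_of_notMem hxC, hxB, this.le]
        · rw [indicator_of_mem (show x ∈ I \ B from ⟨hx, hxB⟩)]
          exact (hfM x).trans le_self_add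
    _ = ∫⁻ x in I, (I \ B).indicator (fun _ => M) x ∂μ +
          (∫⁻ x in I, C.indicator (fun _ => M) x ∂μ + t * μ I) := by
        rw [lintegral_add_left (measurable_const.indicator (hI.diff hB)),
          lintegral_add_right _ measurable_const, setLIntegral_const]
    _ ≤ M * μ (I \ B) + (M * μ C + t * μ I) := by
        gcongr
        · exact (setLIntegral_le_lintegral _ _).trans (lintegral_indicator_const_le _ _)
        · exact (setLIntegral_le_lintegral _ _).trans (lintegral_indicator_const_le _ _)
    _ = _ := by ring

section SlidingWindow

variable {A : Set ℝ}

/-- Both sides are the product measure of `{(s, u) | s ∈ I, u ∈ A, s ≤ u ≤ s + r}`. -/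
lemma setLIntegral_volume_inter_Icc_add (hA : MeasurableSet A) {I : Set ℝ} (hI : MeasurableSet I)
    (r : ℝ) :
    ∫⁻ s in I, volume (A ∩ Icc s (s + r)) = ∫⁻ u in A, volume (I ∩ Icc (u - r) u) := by
  have hP : MeasurableSet {p : ℝ × ℝ | p.1 ∈ I ∧ p.2 ∈ A ∧ p.1 ≤ p.2 ∧ p.2 ≤ p.1 + r} :=
    (measurable_fst hI).inter <| (measurable_snd hA).inter <|
      (measurableSet_le measurable_fst measurable_snd).inter
        (measurableSet_le measurable_snd (measurable_fst.add_const r))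
  rw [← lintegral_indicator hI, ← lintegral_indicator hA]
  calc ∫⁻ s, I.indicator (fun s => volume (A ∩ Icc s (s + r))) s
      = (volume.prod volume) {p : ℝ × ℝ | p.1 ∈ I ∧ p.2 ∈ A ∧ p.1 ≤ p.2 ∧ p.2 ≤ p.1 + r} := by
        rw [Measure.prod_apply hP]
        congr 1 with s
        by_cases hs : s ∈ I
        · simp only [indicator_of_mem hs]
          congr 1 with u
          simp only [mem_preimage, mem_ofPred_eq, mem_inter_iff, mem_Icc, hs, true_and]
        · simp [hs]
    _ = ∫⁻ u, A.indicator (fun u => volume (I ∩ Icc (u - r) u)) u := by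
        rw [Measure.prod_apply_symm hP]
        congr 1 with u
        by_cases hu : u ∈ A
        · simp only [indicator_of_mem hu]
          congr 1 with s
          simp only [mem_preimage, mem_ofPred_eq, mem_inter_iff, mem_Icc, hu, true_and,
            sub_le_iff_le_add]
          tauto
        · simp [hu]

lemma mul_volume_inter_Icc_le_setLIntegral (hA : MeasurableSet A) (a c r : ℝ) :
    ENNReal.ofReal r * volume (A ∩ Icc (a + r) c) ≤
      ∫⁻ s in Icc a c, volume (A ∩ Icc s (s + r)) := by
  rw [setLIntegral_volume_inter_Icc_add hA measurableSet_Icc, ← setLIntegral_const]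
  calc ∫⁻ _ in A ∩ Icc (a + r) c, ENNReal.ofReal r
      ≤ ∫⁻ u in A ∩ Icc (a + r) c, volume (Icc a c ∩ Icc (u - r) u) := by
        refine setLIntegral_mono' (hA.inter measurableSet_Icc) fun u ⟨_, hu₁, hu₂⟩ => ?_
        rw [Icc_inter_Icc, max_eq_right (by linarith), min_eq_right hu₂, Real.volume_Icc]
        simp
    _ ≤ ∫⁻ u in A, volume (Icc a c ∩ Icc (u - r) u) :=
        lintegral_mono_set inter_subset_left

lemma mul_volume_inter_Icc_le_mul_meas_ge_add (hA : MeasurableSet A) {B : Set ℝ}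
    (hB : MeasurableSet B) (a c r : ℝ) (t : ℝ≥0∞) :
    ENNReal.ofReal r * volume (A ∩ Icc (a + r) c) ≤
      ENNReal.ofReal r * volume {s | s ∈ B ∩ Icc a c ∧ t ≤ volume (A ∩ Icc s (s + r))} +
        t * volume (Icc a c) + ENNReal.ofReal r * volume (Icc a c \ B) :=
  (mul_volume_inter_Icc_le_setLIntegral hA a c r).trans <|
    setLIntegral_le_mul_meas_ge_add measurableSet_Icc hB (volume_inter_Icc_add_le A · r) t

end SlidingWindow

theorem stmt_3 (T T' b : ℝ) (hT : 0 < T) (hb : b ∈ Set.Ioo (0 : ℝ) 1)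
    (hT' : 0 < T') (hT'le : T' ≤ b * T / 16)
    (A B : Set ℝ) (hA : MeasurableSet A) (hB : MeasurableSet B)
    (hAsub : A ⊆ Set.Icc 0 T) (hBsub : B ⊆ Set.Icc 0 T)
    (hBmeas : ENNReal.ofReal ((1 - b / 8) * T) ≤ volume B)
    (hAmeas : ENNReal.ofReal (b * T) ≤ volume A) :
    ENNReal.ofReal (b * T / 4) ≤
      volume {s : ℝ | s ∈ B ∩ Set.Icc 0 (T - T') ∧
        ENNReal.ofReal (b * T' / 4) ≤ volume (A ∩ Set.Icc s (s + T'))} := by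
  obtain ⟨hb0, hb1⟩ := hb
  set C := {s : ℝ | s ∈ B ∩ Set.Icc 0 (T - T') ∧
    ENNReal.ofReal (b * T' / 4) ≤ volume (A ∩ Set.Icc s (s + T'))}
  have hA' : ENNReal.ofReal (b * T) ≤
      volume (A ∩ Icc T' (T - T')) + ENNReal.ofReal T' + ENNReal.ofReal T' := by
    simpa using hAmeas.trans (volume_le_volume_inter_Icc_add hAsub T' (T - T'))
  have hwindow := mul_volume_inter_Icc_le_mul_meas_ge_add hA hB 0 (T - T') T'
    (ENNReal.ofReal (b * T' / 4))
  rw [zero_add] at hwindow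
  have hgap : ENNReal.ofReal (b * T' / 4) * volume (Icc 0 (T - T')) ≤
      ENNReal.ofReal T' * ENNReal.ofReal (b * T / 4) := by
    rw [Real.volume_Icc, ← ENNReal.ofReal_mul (by positivity), ← ENNReal.ofReal_mul hT'.le]
    exact ENNReal.ofReal_le_ofReal (by nlinarith [mul_pos (mul_pos hb0 hT') hT'])
  have hBc : volume (Icc 0 (T - T') \ B) ≤ ENNReal.ofReal (b * T / 8) :=
    (volume_Icc_sdiff_le hB hBsub (by linarith) (by nlinarith) hBmeas).trans_eq (by ring_nf)
  have key : ENNReal.ofReal T' * ENNReal.ofReal (b * T) ≤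
      ENNReal.ofReal T' * (volume C + ENNReal.ofReal (b * T / 2)) :=
    calc ENNReal.ofReal T' * ENNReal.ofReal (b * T)
        ≤ ENNReal.ofReal T' * volume (A ∩ Icc T' (T - T')) +
            ENNReal.ofReal T' * (ENNReal.ofReal T' + ENNReal.ofReal T') := by
          rw [← mul_add, ← add_assoc]; gcongr
      _ ≤ ENNReal.ofReal T' * volume C + ENNReal.ofReal T' * ENNReal.ofReal (b * T / 4) +
            ENNReal.ofReal T' * ENNReal.ofReal (b * T / 8) +
            ENNReal.ofReal T' * (ENNReal.ofReal T' + ENNReal.ofReal T') := by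
          gcongr
          exact hwindow.trans (by gcongr _ + ?_ + _ * ?_)
      _ = ENNReal.ofReal T' * (volume C + ENNReal.ofReal (b * T / 4 + b * T / 8 + (T' + T'))) := by
          rw [ENNReal.ofReal_add (by positivity) (by positivity),
            ENNReal.ofReal_add (by positivity) (by positivity), ENNReal.ofReal_add hT'.le hT'.le]
          ring
      _ ≤ ENNReal.ofReal T' * (volume C + ENNReal.ofReal (b * T / 2)) := by
          gcongr; linarith
  have hC := (ENNReal.mul_le_mul_iff_right (by simpa using hT') ENNReal.ofReal_ne_top).1 key
  calc ENNReal.ofReal (b * T / 4) ≤ ENNReal.ofReal (b * T - b * T / 2) :=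
        ENNReal.ofReal_le_ofReal (by linarith)
    _ ≤ volume C := by
        rw [ENNReal.ofReal_sub _ (by positivity)]; exact tsub_le_iff_right.2 hC
end
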